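/- Let φ ∈ ℒ be consistent and let ℳ_φ ⊆ 𝒢. The following are equivalent: (I) ℳ_φ is decreasing, ℳ_φ contains all models of φ, and for all π, π' ∈ 𝒢, if π ∈ ℳ_φ and π' ⊨ φ then π∘π' ⊨ φ; (II) φ is strongly compositional, and for all π ∈ 𝒢, π ⊨* φ if and only if π ∈ ℳ_φ. -/

import Mathlib

namespace LexPref

/-- A pair consisting of a variable and a total order (as a binary relation) on its domain. -/
structure LexPair (ι : Type*) (D : ι → Type*) where
  var : ι
  ord : D var → D var → Prop
  isLin : IsLinearOrder (D var) ord

/-- An outcome assigns a value to every variable. -/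
abbrev Outcome (ι : Type*) (D : ι → Type*) := ∀ i, D i

/-- A lexicographic model: a list of pairs (variable, total order) with pairwise
distinct variables. -/
abbrev LexModel (ι : Type*) (D : ι → Type*) :=
  { l : List (LexPair ι D) // (l.map LexPair.var).Nodup }

variable {ι : Type*} {D : ι → Type*}

/-- The list of variables occurring in a lex model. -/
def vars (π : LexModel ι D) : List ι := π.1.map LexPair.var

/-- The empty lex model. -/
def emptyModel : LexModel ι D := ⟨[], List.nodup_nil⟩

/-- Composition of lex models: `π` followed by the pairs of `π'` whose variable does
not occur in `π`. -/
def comp [DecidableEq ι] (π π' : LexModel ι D) : LexModel ι D :=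
  ⟨π.1 ++ π'.1.filter (fun p => decide (p.var ∉ vars π)), by
    have h1 : (π'.1.filter (fun p => decide (p.var ∉ vars π))).Sublist π'.1 :=
      List.filter_sublist
    rw [List.map_append, List.nodup_append]
    refine ⟨π.2, (h1.map LexPair.var).nodup π'.2, ?_⟩
    intro x hx y hy
    obtain ⟨p, hp, rfl⟩ := List.mem_map.mp hy
    have hd := List.of_mem_filter hp
    simp only [decide_eq_true_eq] at hd
    intro hxy
    rw [hxy] at hx
    exact hd hx⟩

/-- `π'` extends `π`: `π' ≠ π` and the sequence `π'` begins with `π`. -/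
def Extends (π' π : LexModel ι D) : Prop := π' ≠ π ∧ π.1 <+: π'.1

/-- `π' ⊒ π`: `π'` extends or equals `π`. -/
def ExtendsEq (π' π : LexModel ι D) : Prop := π.1 <+: π'.1

/-- Lexicographic weak preference along a list of pairs. -/
def prefList : List (LexPair ι D) → Outcome ι D → Outcome ι D → Prop
  | [], _, _ => True
  | p :: rest, α, β =>
      (α p.var ≠ β p.var ∧ p.ord (α p.var) (β p.var)) ∨
      (α p.var = β p.var ∧ prefList rest α β)

/-- Lexicographic strict preference along a list of pairs. -/
def sprefList : List (LexPair ι D) → Outcome ι D → Outcome ι D → Prop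
  | [], _, _ => False
  | p :: rest, α, β =>
      (α p.var ≠ β p.var ∧ p.ord (α p.var) (β p.var)) ∨
      (α p.var = β p.var ∧ sprefList rest α β)

/-- `α ≽_π β`. -/
def pref (π : LexModel ι D) (α β : Outcome ι D) : Prop := prefList π.1 α β

/-- `α ≻_π β`. -/
def spref (π : LexModel ι D) (α β : Outcome ι D) : Prop := sprefList π.1 α β

/-- `α ≡_π β`: the outcomes agree on all variables of `π`. -/
def eqOn (π : LexModel ι D) (α β : Outcome ι D) : Prop := ∀ X ∈ vars π, α X = β X

section Language

variable {L : Type*} (sat : LexModel ι D → L → Prop)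

/-- `π ⊨ Γ`. -/
def satSet (π : LexModel ι D) (Γ : Set L) : Prop := ∀ φ ∈ Γ, sat π φ

/-- `Γ` is consistent: some lex model satisfies it. -/
def Consistent (Γ : Set L) : Prop := ∃ π, satSet sat π Γ

/-- `π ⊨* φ`: some `π' ⊒ π` satisfies `φ`. -/
def satStar (π : LexModel ι D) (φ : L) : Prop := ∃ π', ExtendsEq π' π ∧ sat π' φ

/-- `π ⊨* Γ`. -/
def satStarSet (π : LexModel ι D) (Γ : Set L) : Prop := ∀ φ ∈ Γ, satStar sat π φ

/-- `φ` is compositional. -/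
def CompositionalStmt [DecidableEq ι] (φ : L) : Prop :=
  ∀ π π', sat π φ → sat π' φ → sat (comp π π') φ

/-- `Γ` is compositional. -/
def Compositional [DecidableEq ι] (Γ : Set L) : Prop :=
  ∀ φ ∈ Γ, CompositionalStmt sat φ

/-- `φ` is strongly compositional. -/
def StronglyCompositionalStmt [DecidableEq ι] (φ : L) : Prop :=
  ∀ π π', satStar sat π φ → sat π' φ → sat (comp π π') φ

/-- `Γ` is strongly compositional. -/
def StronglyCompositional [DecidableEq ι] (Γ : Set L) : Prop :=
  ∀ φ ∈ Γ, StronglyCompositionalStmt sat φ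

/-- `π` is a maximal model of `Γ`. -/
def MaximalModel (π : LexModel ι D) (Γ : Set L) : Prop :=
  satSet sat π Γ ∧ ∀ π', Extends π' π → ¬ satSet sat π' Γ

/-- `π` is a maximal `⊨*`-model of `Γ`. -/
def MaximalStarModel (π : LexModel ι D) (Γ : Set L) : Prop :=
  satStarSet sat π Γ ∧ ∀ π', Extends π' π → ¬ satStarSet sat π' Γ

end Language

/-- `O_σ(𝒜)`: the optimal elements of `A` with respect to `σ`. -/
def opt (σ : LexModel ι D) (A : Set (Outcome ι D)) : Set (Outcome ι D) :=
  {α ∈ A | ∀ β ∈ A, pref σ α β}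

/-- Iterated optimisation `𝒜_{π₁,…,π_k}`. -/
def iterOpt : List (LexModel ι D) → Set (Outcome ι D) → Set (Outcome ι D)
  | [], A => A
  | σ :: rest, A => iterOpt rest (opt σ A)

end LexPref

namespace LexPref

/-- A set of lex models is decreasing if it is closed under passing from an
extension to the extended model. -/
def DecreasingSet {ι : Type*} {D : ι → Type*} (M : Set (LexModel ι D)) : Prop :=
  ∀ π π' : LexModel ι D, Extends π' π → π' ∈ M → π ∈ M

/-!
The set of `⊨*`-models of `φ` is the downward closure of its models under extension. Under (I),
`ℳ_φ` is decreasing and contains every model, so it contains that closure; conversely, composing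
`π ∈ ℳ_φ` with some model of `φ` gives a model `π ∘ π₀` extending `π`, so `π ⊨* φ`. Hence `ℳ_φ` is
exactly the set of `⊨*`-models, and the composition clause of (I) becomes strong compositionality.
-/

section

variable {ι : Type*} {D : ι → Type*} {L : Type*} {sat : LexModel ι D → L → Prop} {φ : L}

theorem extendsEq_comp [DecidableEq ι] (π π' : LexModel ι D) : ExtendsEq (comp π π') π :=
  List.prefix_append _ _

theorem satStar_of_sat {π : LexModel ι D} (h : sat π φ) : satStar sat π φ :=
  ⟨π, List.prefix_refl _, h⟩

theorem satStar_of_extendsEq {π π' : LexModel ι D} (hext : ExtendsEq π' π)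
    (h : satStar sat π' φ) : satStar sat π φ :=
  let ⟨π'', hext', hsat⟩ := h
  ⟨π'', hext.trans hext', hsat⟩

theorem satStar_of_sat_comp [DecidableEq ι] {π π' : LexModel ι D} (h : sat (comp π π') φ) :
    satStar sat π φ :=
  ⟨comp π π', extendsEq_comp π π', h⟩

theorem decreasingSet_setOf_satStar (sat : LexModel ι D → L → Prop) (φ : L) :
    DecreasingSet {π | satStar sat π φ} :=
  fun _ _ hext h => satStar_of_extendsEq hext.2 h

theorem DecreasingSet.mem_of_satStar {M : Set (LexModel ι D)} (hdec : DecreasingSet M)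
    (hmod : ∀ π, sat π φ → π ∈ M) {π : LexModel ι D} (h : satStar sat π φ) : π ∈ M := by
  obtain ⟨π', hext, hsat⟩ := h
  by_cases heq : π' = π
  · exact heq ▸ hmod π' hsat
  · exact hdec π π' ⟨heq, hext⟩ (hmod π' hsat)

end

theorem strongly_compositional_characterisation_general {ι : Type*} {D : ι → Type*} [DecidableEq ι]
    {L : Type*}
    (sat : LexModel ι D → L → Prop) (φ : L)
    (hcons : ∃ π, sat π φ) (M : Set (LexModel ι D)) :
    (DecreasingSet M ∧ (∀ π, sat π φ → π ∈ M) ∧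
      (∀ π π', π ∈ M → sat π' φ → sat (comp π π') φ)) ↔
    (StronglyCompositionalStmt sat φ ∧ ∀ π, (satStar sat π φ ↔ π ∈ M)) := by
  constructor
  · rintro ⟨hdec, hmod, hcomp⟩
    obtain ⟨π₀, hπ₀⟩ := hcons
    have hM : ∀ π, satStar sat π φ ↔ π ∈ M := fun π =>
      ⟨hdec.mem_of_satStar hmod, fun hπ => satStar_of_sat_comp (hcomp π π₀ hπ hπ₀)⟩
    exact ⟨fun π π' hstar => hcomp π π' ((hM π).mp hstar), hM⟩
  · rintro ⟨hsc, hM⟩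
    have hMeq : M = {π | satStar sat π φ} := Set.ext fun π => (hM π).symm
    subst hMeq
    exact ⟨decreasingSet_setOf_satStar sat φ, fun _ => satStar_of_sat, hsc⟩

/-- characterisation of strong compositionality via a set `ℳ_φ`. -/
theorem strongly_compositional_characterisation {ι : Type*} {D : ι → Type*} [DecidableEq ι]
    [Fintype ι] [∀ i, Fintype (D i)] {L : Type*}
    (sat : LexModel ι D → L → Prop) (φ : L)
    (hcons : ∃ π, sat π φ) (M : Set (LexModel ι D)) :
    (DecreasingSet M ∧ (∀ π, sat π φ → π ∈ M) ∧
      (∀ π π', π ∈ M → sat π' φ → sat (comp π π') φ)) ↔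
    (StronglyCompositionalStmt sat φ ∧ ∀ π, (satStar sat π φ ↔ π ∈ M)) :=
  strongly_compositional_characterisation_general sat φ hcons M

end LexPref
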